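/- Two-round graded agreement (Berman–Garay–Perry protocol). Assume n > 3t and each node v has an input x_v ∈ 𝒱. The protocol prescribes: in round 1, every correct node w sends x_w to all nodes; in round 2, a correct node w sends x_w to all nodes if it received the value x_w from at least n − t nodes in round 1, and otherwise sends nothing. After round 2, each correct node v outputs a pair (y_v, g_v) ∈ 𝒱 × {0,1} determined as follows: if v received x_v from at least n − t nodes in round 2, then (y_v, g_v) = (x_v, 1); otherwise, if some value was received by v from at least t + 1 nodes in round 2, then g_v = 0 and y_v is some value that v received from at least t + 1 nodes in round 2; otherwise (y_v, g_v) = (x_v, 0). Then in every execution: (Validity) if there is x ∈ 𝒱 with x_v = x for all v ∈ H, then (y_v, g_v) = (x, 1) for every v ∈ H; and (Graded Agreement) if g_w = 1 for some w ∈ H, then y_v = y_w for every v ∈ H. -/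

import Mathlib

/-!
Correct nodes send the same message to every node, so two nodes' views of any value differ by at
most the `t` faulty senders. Hence two round-1 quorums of size `n - t` (even at different nodes)
must be for the same value when `n > 3t`, and every value seen `t + 1` times in round 2 was sent by
a correct node holding such a quorum: all those values coincide. A correct node with grade `1` saw
`n - t` round-2 copies of its input, so every node sees at least `n - 2t > t` of them, which forces
its output to be that value. Validity is immediate: with unanimous correct inputs every correct
node holds both quorums.
-/

/-- Number of distinct senders from which `v` received the message `c`
(`recv u` is the message received from node `u`). -/
def recvCount {n : ℕ} {M : Type*} [DecidableEq M]
    (recv : Fin n → Option M) (c : M) : ℕ :=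
  (Finset.univ.filter fun u => recv u = some c).card

open Finset

def IsBroadcast {n : ℕ} {M : Type*} (H : Finset (Fin n)) (recv : Fin n → Fin n → Option M) :
    Prop :=
  ∀ v v', ∀ w ∈ H, recv v w = recv v' w

theorem IsBroadcast.of_forall_eq {n : ℕ} {M : Type*} {H : Finset (Fin n)}
    {recv : Fin n → Fin n → Option M} {m : Fin n → Option M}
    (h : ∀ v, ∀ w ∈ H, recv v w = m w) : IsBroadcast H recv :=
  fun v v' w hw => (h v w hw).trans (h v' w hw).symm

section Counting

variable {n t : ℕ} {M : Type*} [DecidableEq M] {H : Finset (Fin n)}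

theorem sub_le_card_of_card_univ_sdiff_le (hH : #(univ \ H) ≤ t) : n - t ≤ #H := by
  rw [card_univ_sdiff, Fintype.card_fin] at hH
  omega

theorem sub_le_recvCount (hH : #(univ \ H) ≤ t) {recv : Fin n → Option M} {c : M}
    (hc : ∀ w ∈ H, recv w = some c) : n - t ≤ recvCount recv c :=
  (sub_le_card_of_card_univ_sdiff_le hH).trans
    (card_le_card fun w hw => mem_filter.2 ⟨mem_univ w, hc w hw⟩)

theorem exists_mem_of_lt_recvCount (hH : #(univ \ H) ≤ t) {recv : Fin n → Option M} {c : M}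
    (hc : t < recvCount recv c) : ∃ w ∈ H, recv w = some c := by
  have hHcard := sub_le_card_of_card_univ_sdiff_le hH
  have hlt : #(univ : Finset (Fin n)) < recvCount recv c + #H := by
    rw [card_univ, Fintype.card_fin]
    omega
  obtain ⟨w, hw⟩ := inter_nonempty_of_card_lt_card_add_card (subset_univ _) (subset_univ H) hlt
  exact ⟨w, (mem_inter.1 hw).2, (mem_filter.1 (mem_inter.1 hw).1).2⟩

namespace IsBroadcast

variable {recv : Fin n → Fin n → Option M}

theorem recvCount_le_add (hb : IsBroadcast H recv) (hH : #(univ \ H) ≤ t) (v v' : Fin n)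
    (c : M) : recvCount (recv v) c ≤ recvCount (recv v') c + t := by
  have hsub :
      univ.filter (recv v · = some c) ⊆ univ.filter (recv v' · = some c) ∪ (univ \ H) := by
    intro w
    simp only [mem_filter, mem_union, mem_sdiff, mem_univ, true_and]
    intro hw
    by_cases hwH : w ∈ H
    · exact Or.inl (hb v v' w hwH ▸ hw)
    · exact Or.inr hwH
  calc recvCount (recv v) c ≤ recvCount (recv v') c + #(univ \ H) :=
        (card_le_card hsub).trans (card_union_le _ _)
    _ ≤ recvCount (recv v') c + t := Nat.add_le_add_left hH _

theorem lt_recvCount_of_sub_le (hb : IsBroadcast H recv) (hnt : 3 * t < n)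
    (hH : #(univ \ H) ≤ t) {w : Fin n} {c : M} (hw : n - t ≤ recvCount (recv w) c) (v : Fin n) :
    t < recvCount (recv v) c := by
  have := hb.recvCount_le_add hH w v c
  omega

/-- Quorum intersection: the two quorums, transported to `v₁`, are disjoint sets of sizes
`≥ n - t` and `≥ n - 2t`, which do not fit into `n` nodes. -/
theorem eq_of_sub_le_recvCount (hb : IsBroadcast H recv) (hnt : 3 * t < n)
    (hH : #(univ \ H) ≤ t) {v₁ v₂ : Fin n} {c₁ c₂ : M}
    (h₁ : n - t ≤ recvCount (recv v₁) c₁) (h₂ : n - t ≤ recvCount (recv v₂) c₂) :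
    c₁ = c₂ := by
  by_contra hne
  have h₂' := hb.recvCount_le_add hH v₂ v₁ c₂
  unfold recvCount at h₁ h₂ h₂'
  set S₁ := univ.filter (recv v₁ · = some c₁)
  set S₂ := univ.filter (recv v₁ · = some c₂)
  have hdisj : Disjoint S₁ S₂ :=
    disjoint_filter.2 fun _ _ hw₁ hw₂ => hne (Option.some_injective _ (hw₁.symm.trans hw₂))
  have hsum := card_le_univ (S₁ ∪ S₂)
  rw [card_union_of_disjoint hdisj, Fintype.card_fin] at hsum
  omega

end IsBroadcast

end Counting

section Protocol

variable {n t : ℕ} {𝒱 : Type*} [DecidableEq 𝒱] {H : Finset (Fin n)} {x : Fin n → 𝒱}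
  {recv1 recv2 : Fin n → Fin n → Option 𝒱}

theorem round2_sender
    (h2 : ∀ v : Fin n, ∀ w ∈ H, recv2 v w =
      if n - t ≤ recvCount (recv1 w) (x w) then some (x w) else none)
    {v w : Fin n} {c : 𝒱} (hw : w ∈ H) (hc : recv2 v w = some c) :
    x w = c ∧ n - t ≤ recvCount (recv1 w) (x w) := by
  rw [h2 v w hw] at hc
  split_ifs at hc with hq
  exact ⟨Option.some_injective _ hc, hq⟩

theorem eq_of_lt_recvCount_round2 (hnt : 3 * t < n) (hH : #(univ \ H) ≤ t)
    (h1 : ∀ v : Fin n, ∀ w ∈ H, recv1 v w = some (x w))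
    (h2 : ∀ v : Fin n, ∀ w ∈ H, recv2 v w =
      if n - t ≤ recvCount (recv1 w) (x w) then some (x w) else none)
    {v₁ v₂ : Fin n} {c₁ c₂ : 𝒱}
    (h₁ : t < recvCount (recv2 v₁) c₁) (h₂ : t < recvCount (recv2 v₂) c₂) :
    c₁ = c₂ := by
  obtain ⟨w₁, hw₁, hr₁⟩ := exists_mem_of_lt_recvCount hH h₁
  obtain ⟨w₂, hw₂, hr₂⟩ := exists_mem_of_lt_recvCount hH h₂
  obtain ⟨rfl, hq₁⟩ := round2_sender h2 hw₁ hr₁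
  obtain ⟨rfl, hq₂⟩ := round2_sender h2 hw₂ hr₂
  exact (IsBroadcast.of_forall_eq h1).eq_of_sub_le_recvCount hnt hH hq₁ hq₂

end Protocol

theorem graded_agreement_two_rounds
    {n t : ℕ} {𝒱 : Type*} [DecidableEq 𝒱]
    (hnt : 3 * t < n)
    (H : Finset (Fin n)) (hH : (Finset.univ \ H).card ≤ t)
    (x : Fin n → 𝒱)
    (recv1 recv2 : Fin n → Fin n → Option 𝒱)
    -- round 1: every correct node sends its input to all nodes
    (h1 : ∀ v : Fin n, ∀ w ∈ H, recv1 v w = some (x w))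
    -- round 2: a correct node repeats its input iff it was received n − t times
    (h2 : ∀ v : Fin n, ∀ w ∈ H, recv2 v w =
      if n - t ≤ recvCount (recv1 w) (x w) then some (x w) else none)
    (y : Fin n → 𝒱) (g : Fin n → Fin 2)
    -- output rule at correct nodes
    (hout : ∀ v ∈ H,
      (n - t ≤ recvCount (recv2 v) (x v) → y v = x v ∧ g v = 1) ∧
      (¬ n - t ≤ recvCount (recv2 v) (x v) →
        (∃ c : 𝒱, t + 1 ≤ recvCount (recv2 v) c) →
          g v = 0 ∧ t + 1 ≤ recvCount (recv2 v) (y v)) ∧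
      (¬ n - t ≤ recvCount (recv2 v) (x v) →
        ¬ (∃ c : 𝒱, t + 1 ≤ recvCount (recv2 v) c) →
          y v = x v ∧ g v = 0)) :
    -- Validity
    (∀ c : 𝒱, (∀ v ∈ H, x v = c) → ∀ v ∈ H, y v = c ∧ g v = 1) ∧
    -- Graded Agreement
    (∀ w ∈ H, g w = 1 → ∀ v ∈ H, y v = y w) := by
  refine ⟨fun c hx v hv => ?_, fun w hw hgw v hv => ?_⟩
  · have hready (w : Fin n) (hw : w ∈ H) : n - t ≤ recvCount (recv1 w) (x w) :=
      sub_le_recvCount hH fun u hu => by rw [h1 w u hu, hx u hu, hx w hw]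
    have hq : n - t ≤ recvCount (recv2 v) (x v) := sub_le_recvCount hH fun w hw => by
      rw [h2 v w hw, if_pos (hready w hw), hx w hw, hx v hv]
    obtain ⟨hy, hg⟩ := (hout v hv).1 hq
    exact ⟨hy.trans (hx v hv), hg⟩
  · have hquorum : n - t ≤ recvCount (recv2 w) (x w) := by
      by_contra hq
      have h01 : g w ≠ 0 := by rw [hgw]; decide
      by_cases hc : ∃ c : 𝒱, t + 1 ≤ recvCount (recv2 w) c
      · exact h01 ((hout w hw).2.1 hq hc).1
      · exact h01 ((hout w hw).2.2 hq hc).2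
    have hsupport := (IsBroadcast.of_forall_eq h2).lt_recvCount_of_sub_le hnt hH hquorum
    rw [((hout w hw).1 hquorum).1]
    by_cases hqv : n - t ≤ recvCount (recv2 v) (x v)
    · rw [((hout v hv).1 hqv).1]
      have hlt : t < recvCount (recv2 v) (x v) := by omega
      exact eq_of_lt_recvCount_round2 hnt hH h1 h2 hlt (hsupport w)
    · exact eq_of_lt_recvCount_round2 hnt hH h1 h2
        ((hout v hv).2.1 hqv ⟨x w, hsupport v⟩).2 (hsupport w)
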